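/- arXiv:2407.13190 — 2 statements merged into one kernel-verified Lean document; each statement's English description precedes it below -/
import Mathlib

section
/- Every compact operator $Z$ on the Hilbert space $\mathcal{H}^2 = \bigoplus_{l\in I} H^2[-\pi,\pi]$ (with $I=(0,1]\cap\mathbb{Q}$) is zero-distributed: $\lim_{n\to\infty} \frac{1}{n}\sum_{e_{lk}\in B_n} \|Z(e_{lk})\|^2 = 0$, where $B_n = \{e_{lk} : k = 0,\dots,\lfloor n/\lfloor\sqrt{n}\rfloor\rfloor - 1,\ l \in I_{\lfloor\sqrt{n}\rfloor}\}$ and $I_m = \{j/m : j=1,\dots,m\}$. -/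
open Filter Finset MeasureTheory
open scoped ENNReal

noncomputable section

/-- The index set `I = (0,1] ∩ ℚ`. -/
abbrev Iq : Type := {q : ℚ // 0 < q ∧ q ≤ 1}

/-- The Hilbert space `ℋ² = ⊕_{l ∈ I} H²[-π,π]`, realized via the orthonormal basis
`{e_{lk} : l ∈ I, k ∈ ℕ}` as `ℓ²(I × ℕ)`. -/
abbrev H2 : Type := lp (fun _ : Iq × ℕ => ℂ) 2

/-- The basis vector `e_{lk}` of `ℋ²` (zero if `l ∉ (0,1]`). -/
def basisVec (l : ℚ) (k : ℕ) : H2 :=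
  if h : 0 < l ∧ l ≤ 1 then lp.single 2 ((⟨l, h⟩ : Iq), k) (1 : ℂ) else 0

/-- Index set for `Bₙ = {e_{lr} : r = 0,…,⌊n/⌊√n⌋⌋-1, l ∈ I_{⌊√n⌋}}`:
pairs `(p, r)` with `1 ≤ p ≤ ⌊√n⌋` and `r < ⌊n/⌊√n⌋⌋`, where `l = p/⌊√n⌋`. -/
def Bfin (n : ℕ) : Finset (ℕ × ℕ) :=
  (Finset.Icc 1 (Nat.sqrt n)) ×ˢ (Finset.range (n / Nat.sqrt n))

/-- The basis vector of `Bₙ` indexed by `(p, r)`, namely `e_{p/⌊√n⌋, r}`. -/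
def bvec (n : ℕ) (pr : ℕ × ℕ) : H2 :=
  basisVec ((pr.1 : ℚ) / (Nat.sqrt n : ℚ)) pr.2

/-- `∑_{e ∈ C} ‖Te‖²` for a subset `C` of the index set of `Bₙ`. -/
def sumSq (T : H2 → H2) (n : ℕ) (C : Finset (ℕ × ℕ)) : ℝ :=
  ∑ pr ∈ C, ‖T (bvec n pr)‖ ^ 2

/-- The seminorm `Q(T) = inf { limsup_n (1/√n)(∑_{e ∈ Cₙ} ‖Te‖²)^{1/2} }`, the infimum
over all decompositions `Bₙ = Cₙ ⊔ Dₙ` with `#Dₙ = o(n)`, valued in `ℝ≥0∞`. -/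
def QQ (T : H2 → H2) : ℝ≥0∞ :=
  ⨅ (C : ℕ → Finset (ℕ × ℕ)) (_ : ∀ n, C n ⊆ Bfin n)
    (_ : Tendsto (fun n => ((Bfin n \ C n).card : ℝ) / n) atTop (nhds 0)),
    Filter.limsup (fun n => ENNReal.ofReal (Real.sqrt (sumSq T n (C n) / n))) atTop

/-- `T` acts like the operator `T_{jk}`:
`T(e_{lr}) = e^{2πijl} e_{l,r+k}` when `r + k ≥ 0`, and `0` otherwise. -/
def IsTjk (T : H2 → H2) (j k : ℤ) : Prop :=
  ∀ (l : ℚ) (r : ℕ), T (basisVec l r) =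
    if 0 ≤ (r : ℤ) + k then
      Complex.exp (2 * Real.pi * Complex.I * (j : ℂ) * (l : ℂ)) • basisVec l ((r : ℤ) + k).toNat
    else 0

/-!
An orthonormal family tends weakly to zero along the cofinite filter (Bessel's inequality), and
a compact operator upgrades this to norm convergence: every cluster point `y` of `Z e_{lk}` in
the compact closure of the image of the unit ball is annihilated by every continuous functional,
so `y = 0`. Hence `‖Z e_{lk}‖²` is below `ε` outside a finite set of indices, and since `Bₙ`
has at most `n` distinct elements, the average over `Bₙ` is at most `C / n + ε`.
-/

open scoped InnerProductSpace

section Orthonormal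

variable {ι 𝕜 E : Type*} [RCLike 𝕜] [NormedAddCommGroup E] [InnerProductSpace 𝕜 E]
  {v : ι → E}

theorem Orthonormal.tendsto_inner_cofinite (hv : Orthonormal 𝕜 v) (x : E) :
    Tendsto (fun i => ⟪x, v i⟫_𝕜) cofinite (nhds 0) := by
  have hsq : Tendsto (fun i => ‖⟪v i, x⟫_𝕜‖ ^ 2) cofinite (nhds 0) :=
    (hv.inner_products_summable x).tendsto_cofinite_zero
  rw [tendsto_zero_iff_norm_tendsto_zero]
  simpa only [norm_inner_symm, Real.sqrt_sq (norm_nonneg _), Real.sqrt_zero] using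
    hsq.sqrt

theorem Orthonormal.tendsto_dual_apply_cofinite [CompleteSpace E] (hv : Orthonormal 𝕜 v)
    (f : StrongDual 𝕜 E) : Tendsto (fun i => f (v i)) cofinite (nhds 0) := by
  simpa only [InnerProductSpace.toDual_symm_apply] using
    hv.tendsto_inner_cofinite ((InnerProductSpace.toDual 𝕜 E).symm f)

theorem IsCompactOperator.tendsto_apply_orthonormal_cofinite [CompleteSpace E]
    {F : Type*} [NormedAddCommGroup F] [NormedSpace 𝕜 F] {T : E →L[𝕜] F}
    (hT : IsCompactOperator T) (hv : Orthonormal 𝕜 v) :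
    Tendsto (fun i => T (v i)) cofinite (nhds 0) := by
  obtain ⟨K, hK, hTK⟩ := hT.image_closedBall_subset_compact (f := T.toLinearMap) 1
  refine hK.tendsto_nhds_of_unique_mapClusterPt
    (Eventually.of_forall fun i => hTK ⟨v i, by simp [hv.1 i], rfl⟩) fun y _ hy => ?_
  refine SeparatingDual.eq_zero_of_forall_dual_eq_zero (R := 𝕜) fun f => ?_
  have hcluster : MapClusterPt (f y) cofinite (fun i => f (T (v i))) :=
    hy.tendsto_comp (f.continuous.tendsto y)
  have hnull : Tendsto (fun i => f (T (v i))) cofinite (nhds 0) :=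
    hv.tendsto_dual_apply_cofinite (f.comp T)
  exact eq_of_nhds_neBot (hcluster.neBot.mono (inf_le_inf_left _ hnull))

end Orthonormal

theorem tendsto_cofinite_of_comp_of_eq_zero_off_range {α β M : Type*} [TopologicalSpace M]
    [Zero M] {φ : α → β} {g : β → M} (hg : ∀ b ∉ Set.range φ, g b = 0)
    (h : Tendsto (g ∘ φ) cofinite (nhds 0)) : Tendsto g cofinite (nhds 0) := by
  intro U hU
  refine ((h hU).image φ).subset fun b hb => ?_
  obtain ⟨a, rfl⟩ | hbφ := em (b ∈ Set.range φ)
  · exact Set.mem_image_of_mem φ hb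
  · exact absurd (by rw [Set.mem_preimage, hg b hbφ]; exact mem_of_mem_nhds hU) hb

theorem tendsto_one_div_mul_sum_of_card_le {ι : Type*} {f : ι → ℝ} (hf0 : 0 ≤ f)
    (hf : Tendsto f cofinite (nhds 0)) {s : ℕ → Finset ι} (hs : ∀ n, #(s n) ≤ n) :
    Tendsto (fun n : ℕ => (1 / (n : ℝ)) * ∑ i ∈ s n, f i) atTop (nhds 0) := by
  refine tendsto_order.2 ⟨fun a ha => Eventually.of_forall fun n =>
    ha.trans_le (mul_nonneg (by positivity) (sum_nonneg fun i _ => hf0 i)), fun ε hε => ?_⟩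
  have hS : {i | ¬ f i < ε / 2}.Finite := hf.eventually (gt_mem_nhds (half_pos hε))
  set C := ∑ i ∈ hS.toFinset, f i
  have hbound (n : ℕ) : ∑ i ∈ s n, f i ≤ C + n * (ε / 2) := by
    classical
    rw [← sum_filter_add_sum_filter_not (s n) (· ∈ hS.toFinset)]
    gcongr
    · exact sum_le_sum_of_subset_of_nonneg (fun i hi => (mem_filter.1 hi).2) fun i _ _ => hf0 i
    · calc ∑ i ∈ (s n).filter (· ∉ hS.toFinset), f i
          ≤ #((s n).filter (· ∉ hS.toFinset)) * (ε / 2) := by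
            refine sum_le_card_nsmul _ _ _ (fun i hi => ?_) |>.trans_eq (nsmul_eq_mul _ _)
            exact (by simpa using (mem_filter.1 hi).2 : f i < ε / 2).le
        _ ≤ n * (ε / 2) := by
            gcongr
            exact_mod_cast (card_filter_le _ _).trans (hs n)
  filter_upwards [(tendsto_const_div_atTop_nhds_zero_nat C).eventually (gt_mem_nhds (half_pos hε)),
    eventually_gt_atTop 0] with n hC hn
  calc (1 / (n : ℝ)) * ∑ i ∈ s n, f i ≤ (1 / n) * (C + n * (ε / 2)) := by gcongr; exact hbound n
    _ = C / n + ε / 2 := by field_simp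
    _ < ε := by linarith

theorem basisVec_eq_single (l : Iq) (k : ℕ) : basisVec l k = lp.single 2 (l, k) (1 : ℂ) := by
  rw [basisVec, dif_pos l.2]

theorem tendsto_norm_sq_apply_basisVec_cofinite {Z : H2 →L[ℂ] H2} (hZ : IsCompactOperator Z) :
    Tendsto (fun x : ℚ × ℕ => ‖Z (basisVec x.1 x.2)‖ ^ 2) cofinite (nhds 0) := by
  have hb : Orthonormal ℂ fun i : Iq × ℕ => basisVec i.1 i.2 := by
    convert (default : HilbertBasis (Iq × ℕ) ℂ H2).orthonormal using 1
    funext i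
    rw [basisVec_eq_single, ← HilbertBasis.repr_symm_single]
    rfl
  refine tendsto_cofinite_of_comp_of_eq_zero_off_range
    (φ := fun i : Iq × ℕ => ((i.1 : ℚ), i.2)) (fun x hx => ?_) ?_
  · rw [basisVec, dif_neg fun h => hx ⟨(⟨x.1, h⟩, x.2), rfl⟩]
    simp
  · simpa [Function.comp_def] using ((hZ.tendsto_apply_orthonormal_cofinite hb).norm).pow 2

theorem injOn_Bfin (n : ℕ) :
    Set.InjOn (fun pr : ℕ × ℕ => ((pr.1 : ℚ) / Nat.sqrt n, pr.2)) (Bfin n) := by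
  intro a ha b _ hab
  simp only [Bfin, coe_product, coe_Icc, Set.mem_prod, Set.mem_Icc] at ha
  have hs : (Nat.sqrt n : ℚ) ≠ 0 := by
    have := ha.1.1.trans ha.1.2
    exact_mod_cast (by omega : Nat.sqrt n ≠ 0)
  obtain ⟨h1, h2⟩ := Prod.ext_iff.1 hab
  exact Prod.ext (by exact_mod_cast (div_left_inj' hs).1 h1) h2

theorem card_Bfin_le (n : ℕ) : #(Bfin n) ≤ n := by
  rw [Bfin, card_product, Nat.card_Icc, card_range]
  exact Nat.mul_div_le n (Nat.sqrt n)

/-- Every compact operator on `ℋ²` is zero-distributed: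
`(1/n) ∑_{e ∈ Bₙ} ‖Ze‖² → 0`. -/
theorem compact_operator_zero_distributed (Z : H2 →L[ℂ] H2) (hZ : IsCompactOperator ⇑Z) :
    Filter.Tendsto (fun n : ℕ => (1 / (n : ℝ)) * sumSq (⇑Z) n (Bfin n)) atTop (nhds 0) := by
  have hsum (n : ℕ) : sumSq Z n (Bfin n) = ∑ x ∈ (Bfin n).image
      (fun pr : ℕ × ℕ => ((pr.1 : ℚ) / Nat.sqrt n, pr.2)), ‖Z (basisVec x.1 x.2)‖ ^ 2 := by
    rw [sum_image (injOn_Bfin n)]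
    rfl
  simp_rw [hsum]
  exact tendsto_one_div_mul_sum_of_card_le (fun _ => sq_nonneg _)
    (tendsto_norm_sq_apply_basisVec_cofinite hZ) fun n => card_image_le.trans (card_Bfin_le n)
end
end

section
/- The family $\{T_{jk} : j,k \in \mathbb{Z}\}$ is orthonormal with respect to the inner product $\langle T_1, T_2\rangle_G = \lim_{n\to\infty} \frac{1}{n}\sum_{r=0}^{\lfloor n/\lfloor\sqrt{n}\rfloor\rfloor-1}\sum_{l\in I_{\lfloor\sqrt{n}\rfloor}} \langle T_1(e_{lr}), T_2(e_{lr})\rangle$; that is, $\langle T_{j_1 k_1}, T_{j_2 k_2}\rangle_G = \delta_{j_1 j_2}\delta_{k_1 k_2}$. -/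
open Filter Finset MeasureTheory
open scoped ENNReal

noncomputable section

/-!
For `l ∈ (0,1]`, `⟪T₁ e_{lr}, T₂ e_{lr}⟫` vanishes unless `k₁ = k₂`, and then it equals
`e^{2πi(j₂-j₁)l}` for all `r` except the `max(0, -k₁)` smallest ones. With `m = ⌊√n⌋`, summing
over `l = p/m` gives a full sum of `m`-th roots of unity: it is `0` as soon as `m > |j₂ - j₁|` if
`j₁ ≠ j₂`, and `m` if `j₁ = j₂`. In the latter case the normalized sum is
`m (⌊n/m⌋ - max(0, -k₁)) / n`, which tends to `1` because `m = o(n)`.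
-/

open Complex
open scoped Real Topology

theorem exp_two_pi_mul_I_mul_int_div_eq_one_iff {d : ℤ} {m : ℕ} (hm : m ≠ 0) :
    exp (2 * π * I * d / m) = 1 ↔ (m : ℤ) ∣ d := by
  rw [exp_eq_one_iff]
  conv in _ = _ => rw [← mul_comm (2 * π * I), mul_div_assoc, mul_right_inj' (by simp)]
  field_simp [Nat.cast_ne_zero.mpr hm]
  norm_cast

theorem sum_Icc_exp_two_pi_mul_I_mul_div_eq_zero {d : ℤ} {m : ℕ} (hd : ¬ (m : ℤ) ∣ d) :
    ∑ p ∈ Icc 1 m, exp (2 * π * I * d * ((p / m : ℚ) : ℂ)) = 0 := by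
  rcases eq_or_ne m 0 with rfl | hm
  · simp
  set ζ := exp (2 * π * I * d / m)
  have hpow (p : ℕ) : exp (2 * π * I * d * ((p / m : ℚ) : ℂ)) = ζ ^ p := by
    rw [← exp_nat_mul]; push_cast; ring_nf
  have hζm : ζ ^ m = 1 := by
    rw [← hpow, div_self (by exact_mod_cast hm)]
    simpa [mul_comm] using exp_int_mul_two_pi_mul_I d
  have hζ : ζ ≠ 1 := (exp_two_pi_mul_I_mul_int_div_eq_one_iff hm).not.mpr hd
  simp_rw [hpow]
  rw [← Ico_add_one_right_eq_Icc, geom_sum_Ico hζ (by omega), pow_succ, hζm, one_mul, pow_one,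
    sub_self, zero_div]

theorem Nat.tendsto_sqrt_atTop : Tendsto Nat.sqrt atTop atTop :=
  tendsto_atTop_atTop.mpr fun b => ⟨b * b, fun _ hn => Nat.le_sqrt.mpr hn⟩

theorem Nat.tendsto_sqrt_div_self :
    Tendsto (fun n : ℕ => (Nat.sqrt n : ℝ) / n) atTop (𝓝 0) := by
  refine squeeze_zero (fun n => by positivity) (fun n => ?_)
    (tendsto_natCast_atTop_atTop.comp Nat.tendsto_sqrt_atTop).inv_tendsto_atTop
  rcases (Nat.sqrt n).eq_zero_or_pos with h | h
  · simp [h]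
  have hsq : (Nat.sqrt n : ℝ) * Nat.sqrt n ≤ n := by exact_mod_cast Nat.sqrt_le n
  calc (Nat.sqrt n : ℝ) / n ≤ Nat.sqrt n / (Nat.sqrt n * Nat.sqrt n) :=
        div_le_div_of_nonneg_left (by positivity) (by positivity) hsq
    _ = (Nat.sqrt n : ℝ)⁻¹ := by field_simp

theorem tendsto_mul_nat_div_sub_div_self {m : ℕ → ℕ} (hm_pos : ∀ᶠ n in atTop, 0 < m n)
    (hm : Tendsto (fun n => (m n : ℝ) / n) atTop (𝓝 0)) (a : ℕ) :
    Tendsto (fun n => ((m n * (n / m n - a) : ℕ) : ℝ) / n) atTop (𝓝 1) := by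
  have hlower : Tendsto (fun n => 1 - (1 + a) * ((m n : ℝ) / n)) atTop (𝓝 1) := by
    simpa using (hm.const_mul (1 + a : ℝ)).const_sub 1
  refine tendsto_of_tendsto_of_tendsto_of_le_of_le' hlower tendsto_const_nhds ?_ ?_
  · filter_upwards [hm_pos, eventually_gt_atTop 0] with n hmn hn
    have hnat : n ≤ m n * (n / m n - a) + m n * (1 + a) := calc
      n ≤ m n * (n / m n + 1) := (Nat.lt_mul_div_succ n hmn).le
      _ ≤ m n * (n / m n - a + (1 + a)) := Nat.mul_le_mul_left _ (by omega)
      _ = _ := Nat.mul_add _ _ _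
    have hreal : (n : ℝ) ≤ ((m n * (n / m n - a) : ℕ) : ℝ) + m n * (1 + a) := by
      exact_mod_cast hnat
    rw [le_div_iff₀ (by positivity), sub_mul, one_mul, mul_assoc, div_mul_cancel₀ _ (by positivity)]
    linarith
  · filter_upwards [eventually_gt_atTop 0] with n hn
    rw [div_le_one (by positivity)]
    exact_mod_cast (Nat.mul_le_mul_left _ (Nat.sub_le _ _)).trans (Nat.mul_div_le n (m n))

theorem card_filter_range_nonneg_add (N : ℕ) (k : ℤ) :
    #((range N).filter fun r : ℕ => 0 ≤ (r : ℤ) + k) = N - (-k).toNat := by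
  rw [show (range N).filter (fun r : ℕ => 0 ≤ (r : ℤ) + k) = Ico (-k).toNat N by
    ext r; simp only [mem_filter, mem_range, mem_Ico]; omega, Nat.card_Ico]

theorem div_pos_and_div_le_one_of_mem_Icc {p m : ℕ} (hp : p ∈ Icc 1 m) :
    0 < (p : ℚ) / m ∧ (p : ℚ) / m ≤ 1 := by
  rw [mem_Icc] at hp
  have : 0 < p := by omega
  have : 0 < m := by omega
  exact ⟨by positivity, div_le_one_of_le₀ (by exact_mod_cast hp.2) (by positivity)⟩

theorem inner_basisVec_basisVec {l : ℚ} (hl : 0 < l ∧ l ≤ 1) (a b : ℕ) :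
    (inner ℂ (basisVec l a) (basisVec l b) : ℂ) = if a = b then 1 else 0 := by
  rw [basisVec, basisVec, dif_pos hl, dif_pos hl, lp.inner_single_left, lp.single_apply]
  simp [Prod.ext_iff, Pi.single_apply]

theorem IsTjk.inner_apply_basisVec {T1 T2 : H2 → H2} {j1 k1 j2 k2 : ℤ}
    (h1 : IsTjk T1 j1 k1) (h2 : IsTjk T2 j2 k2) {l : ℚ} (hl : 0 < l ∧ l ≤ 1) (r : ℕ) :
    (inner ℂ (T1 (basisVec l r)) (T2 (basisVec l r)) : ℂ) =
      if k1 = k2 ∧ 0 ≤ (r : ℤ) + k1 then exp (2 * π * I * ((j2 - j1 : ℤ) : ℂ) * l)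
      else 0 := by
  rw [h1 l r, h2 l r]
  by_cases hk : k1 = k2
  · subst hk
    by_cases hr : 0 ≤ (r : ℤ) + k1
    · simp only [hr, and_self, if_true, inner_smul_left, inner_smul_right,
        inner_basisVec_basisVec hl, mul_one, ← exp_conj, ← exp_add]
      congr 1
      simp only [map_mul, conj_I, conj_ofReal, map_intCast, map_ratCast, map_ofNat]
      push_cast
      ring
    · simp [hr]
  · split_ifs <;> simp [inner_basisVec_basisVec hl] <;> omega

theorem sum_Bfin_inner_of_isTjk {T1 T2 : H2 → H2} {j1 k1 j2 k2 : ℤ}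
    (h1 : IsTjk T1 j1 k1) (h2 : IsTjk T2 j2 k2) (n : ℕ) :
    ∑ pr ∈ Bfin n, (inner ℂ (T1 (bvec n pr)) (T2 (bvec n pr)) : ℂ) =
      if k1 = k2 then ((n / Nat.sqrt n - (-k1).toNat : ℕ) : ℂ) *
        ∑ p ∈ Icc 1 (Nat.sqrt n),
          exp (2 * π * I * ((j2 - j1 : ℤ) : ℂ) * ((p / Nat.sqrt n : ℚ) : ℂ))
      else 0 := by
  rw [Bfin, sum_product]
  split_ifs with hk
  · rw [mul_sum]
    refine sum_congr rfl fun p hp => ?_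
    simp only [bvec, h1.inner_apply_basisVec h2 (div_pos_and_div_le_one_of_mem_Icc hp), hk,
      true_and]
    rw [← sum_filter, sum_const, nsmul_eq_mul, ← hk, card_filter_range_nonneg_add]
  · refine sum_eq_zero fun p hp => sum_eq_zero fun r _ => ?_
    simp [bvec, h1.inner_apply_basisVec h2 (div_pos_and_div_le_one_of_mem_Icc hp), hk]

/-- The family `{T_{jk}}` is orthonormal for the inner product
`⟨T₁,T₂⟩_G = lim_n (1/n) ∑_{e ∈ Bₙ} ⟨T₁e, T₂e⟩`:
the limit equals `1` if `(j₁,k₁) = (j₂,k₂)` and `0` otherwise. -/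
theorem Tjk_orthonormal (j1 k1 j2 k2 : ℤ) (T1 T2 : H2 → H2)
    (h1 : IsTjk T1 j1 k1) (h2 : IsTjk T2 j2 k2) :
    Filter.Tendsto
      (fun n : ℕ => (1 / (n : ℂ)) * ∑ pr ∈ Bfin n,
        (inner ℂ (T1 (bvec n pr)) (T2 (bvec n pr)) : ℂ))
      atTop (nhds (if j1 = j2 ∧ k1 = k2 then 1 else 0)) := by
  simp_rw [sum_Bfin_inner_of_isTjk h1 h2]
  rcases eq_or_ne k1 k2 with rfl | hk
  · rcases eq_or_ne j1 j2 with rfl | hj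
    · have hlim := tendsto_mul_nat_div_sub_div_self
        (eventually_gt_atTop 0 |>.mono fun _ => Nat.sqrt_pos.mpr) Nat.tendsto_sqrt_div_self
        (-k1).toNat
      simp only [and_self, if_true]
      refine ((continuous_ofReal.tendsto 1).comp hlim).congr fun n => ?_
      simp only [Function.comp_apply, sub_self, Int.cast_zero, mul_zero, zero_mul, exp_zero,
        sum_const, Nat.card_Icc, add_tsub_cancel_right, nsmul_eq_mul, mul_one]
      push_cast
      ring
    · refine tendsto_const_nhds.congr' ?_
      filter_upwards [Nat.tendsto_sqrt_atTop.eventually_gt_atTop (j2 - j1).natAbs] with n hn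
      have hndvd : ¬ (Nat.sqrt n : ℤ) ∣ j2 - j1 := fun hdvd =>
        sub_ne_zero.mpr hj.symm (Int.eq_zero_of_dvd_of_natAbs_lt_natAbs hdvd hn)
      rw [sum_Icc_exp_two_pi_mul_I_mul_div_eq_zero hndvd]
      simp [hj]
  · simp [hk]
end
end
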